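/- arXiv:1204.4865 — 4 statements merged into one kernel-verified Lean document; each statement's English description precedes it below -/
import Mathlib

section
/- Let G be a connected oriented graph with reduced incidence matrix B ∈ ℤ^{m×n}. If α ∈ ℝ^n is such that B α ∈ ℤ^m, then α ∈ ℤ^n. -/
/-!
Extending `α` by `0` at the deleted vertex gives a potential `φ` on all vertices with
`(B α)ₑ = φ(src e) - φ(tgt e)`. So `φ` is an integer at vertex `0` and changes by integers
along every edge; by connectedness it is an integer everywhere.
-/

/-- Reduced (transposed) incidence matrix of an oriented graph on vertices `0,…,n`. -/
def incB (n m : ℕ) (src tgt : Fin m → Fin (n + 1)) : Matrix (Fin m) (Fin n) ℝ :=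
  fun e i => (if src e = i.succ then 1 else 0) - (if tgt e = i.succ then 1 else 0)

/-- Connectedness of the underlying undirected graph. -/
def GraphConnected (n m : ℕ) (src tgt : Fin m → Fin (n + 1)) : Prop :=
  ∀ a b : Fin (n + 1),
    Relation.ReflTransGen
      (fun u v => ∃ e, (src e = u ∧ tgt e = v) ∨ (src e = v ∧ tgt e = u)) a b

theorem AddSubgroup.mem_of_reflTransGen {G V : Type*} [AddGroup G] (S : AddSubgroup G)
    {r : V → V → Prop} {f : V → G} (hr : ∀ u v, r u v → f v - f u ∈ S) {a b : V}
    (hab : Relation.ReflTransGen r a b) (ha : f a ∈ S) : f b ∈ S := by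
  induction hab with
  | refl => exact ha
  | tail _ huv ih => simpa using S.add_mem (hr _ _ huv) ih

theorem Fin.sum_ite_eq_succ_mul {R : Type*} [NonAssocSemiring R] {n : ℕ} (α : Fin n → R)
    (v : Fin (n + 1)) :
    ∑ i : Fin n, (if v = i.succ then (1 : R) else 0) * α i = (Fin.cons 0 α : Fin (n + 1) → R) v := by
  cases v using Fin.cases with
  | zero => simp [(Fin.succ_ne_zero _).symm]
  | succ j => simp [Fin.succ_inj]

theorem incB_mulVec (n m : ℕ) (src tgt : Fin m → Fin (n + 1)) (α : Fin n → ℝ) (e : Fin m) :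
    (incB n m src tgt).mulVec α e =
      (Fin.cons 0 α : Fin (n + 1) → ℝ) (src e) - (Fin.cons 0 α : Fin (n + 1) → ℝ) (tgt e) := by
  simp only [incB, Matrix.mulVec, dotProduct, sub_mul, Finset.sum_sub_distrib,
    Fin.sum_ite_eq_succ_mul]

/-- Integrality: if `B α` is an integer vector for the reduced incidence matrix of a
connected graph, then `α` is an integer vector. -/
theorem stmt_7 (n m : ℕ) (src tgt : Fin m → Fin (n + 1))
    (hconn : GraphConnected n m src tgt)
    (α : Fin n → ℝ)
    (hint : ∀ e, ∃ z : ℤ, (incB n m src tgt).mulVec α e = z) :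
    ∀ i, ∃ z : ℤ, α i = z := by
  let S := (Int.castAddHom ℝ).range
  let φ : Fin (n + 1) → ℝ := Fin.cons 0 α
  have hedge : ∀ e, φ (src e) - φ (tgt e) ∈ S := fun e => by
    obtain ⟨z, hz⟩ := hint e
    exact ⟨z, by simpa [incB_mulVec] using hz.symm⟩
  have hstep : ∀ u v, (∃ e, (src e = u ∧ tgt e = v) ∨ (src e = v ∧ tgt e = u)) →
      φ v - φ u ∈ S := by
    rintro u v ⟨e, ⟨rfl, rfl⟩ | ⟨rfl, rfl⟩⟩
    · simpa using S.neg_mem (hedge e)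
    · exact hedge e
  intro i
  obtain ⟨z, hz⟩ := S.mem_of_reflTransGen hstep (hconn 0 i.succ) ⟨0, by simp [φ]⟩
  exact ⟨z, by simpa [φ] using hz.symm⟩
end

section
/- Let G be a connected oriented graph with reduced incidence matrix B = [B_T; B_⊥] for a spanning tree T, and β = (β_T, β_⊥) ∈ ℝ^m. There exists θ ∈ ℝ^n and k ∈ ℤ^m with B θ = β + 2π k if and only if B_⊥ B_T^{-1} β_T ≡ β_⊥ (mod 2π). Moreover, when this holds, θ := B_T^{-1} β_T is such a solution. -/
open scoped Classical

/-- Tree incidence submatrix (tree edges oriented away from the root `0`; edge `e : Fin n`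
goes from `parent (e+1)` to `e+1`). -/
def treeB (n : ℕ) (parent : Fin (n + 1) → Fin (n + 1)) : Matrix (Fin n) (Fin n) ℝ :=
  fun e i => (if parent e.succ = i.succ then 1 else 0) - (if e = i then 1 else 0)

/-- Incidence rows for the non-tree edges `f : Fin mx` going from `esrc f` to `etgt f`. -/
def chordB (n mx : ℕ) (esrc etgt : Fin mx → Fin (n + 1)) : Matrix (Fin mx) (Fin n) ℝ :=
  fun f i => (if esrc f = i.succ then 1 else 0) - (if etgt f = i.succ then 1 else 0)

/-- Edge `e` lies on the unique tree path from the root `0` to vertex `j`. -/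
def onPath (n : ℕ) (parent : Fin (n + 1) → Fin (n + 1)) (j : Fin (n + 1)) (e : Fin n) :
    Prop :=
  ∃ k : ℕ, parent^[k] j = e.succ

/-!
The tree block is `B_T = P - 1` for the 0/1 matrix `P` sending each tree edge to the edge above
it. Since every vertex reaches the root, `P` is nilpotent, so `B_T` is a unit over `ℤ` and
`B_⊥ B_T⁻¹` has integer entries. Applying `B_⊥ B_T⁻¹` to `B_T θ = β_T + 2π k_T` turns the chord
equations into the congruence; conversely `θ = B_T⁻¹ β_T` solves the tree equations exactly.
-/

open Matrix

theorem Function.exists_iterate_eq_of_forall_exists {α : Type*} [Finite α] {f : α → α} {a : α}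
    (ha : f a = a) (h : ∀ x, ∃ k, f^[k] x = a) : ∃ K, ∀ x, f^[K] x = a := by
  choose k hk using h
  obtain ⟨K, hK⟩ := Finite.bddAbove_range k
  refine ⟨K, fun x => ?_⟩
  have hle : k x ≤ K := hK ⟨x, rfl⟩
  rw [← Nat.sub_add_cancel hle, Function.iterate_add_apply, hk, Function.iterate_fixed ha]

theorem Matrix.map_intCast_mulVec {m n : Type*} [Fintype n] (D : Matrix m n ℤ) (k : n → ℤ)
    (i : m) :
    (D.map (Int.cast : ℤ → ℝ) *ᵥ fun j => (k j : ℝ)) i = ((D *ᵥ k) i : ℝ) :=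
  ((Int.castRingHom ℝ).map_mulVec D k i).symm

theorem Matrix.map_intCast_val_mul_inv {n : Type*} [Fintype n] [DecidableEq n] {R : Type*}
    [Ring R] (u : (Matrix n n ℤ)ˣ) :
    (u : Matrix n n ℤ).map (Int.cast : ℤ → R) * (↑u⁻¹ : Matrix n n ℤ).map Int.cast = 1 := by
  have h := congrArg (Int.castRingHom R).mapMatrix u.mul_inv
  rwa [map_mul, map_one] at h

section CongruenceSolvability

variable {m n : Type*} [Fintype n] [DecidableEq n]

theorem exists_mulVec_eq_add_intMul_of_inv (B : Matrix n n ℝ) (C : Matrix m n ℝ)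
    (hB : IsUnit B.det) (c : ℝ) (βT : n → ℝ) (βP : m → ℝ)
    (h : ∀ f, ∃ z : ℤ, ((C * B⁻¹) *ᵥ βT) f - βP f = c * z) :
    ∃ (kT : n → ℤ) (kP : m → ℤ), (∀ e, (B *ᵥ (B⁻¹ *ᵥ βT)) e = βT e + c * kT e) ∧
      (∀ f, (C *ᵥ (B⁻¹ *ᵥ βT)) f = βP f + c * kP f) := by
  choose z hz using h
  refine ⟨0, z, fun e => ?_, fun f => ?_⟩
  · simp [mulVec_mulVec, mul_nonsing_inv B hB]
  · rw [mulVec_mulVec]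
    linarith [hz f]

theorem exists_mulVec_eq_add_intMul_iff (B : Matrix n n ℝ) (C : Matrix m n ℝ)
    (hB : IsUnit B.det) (D : Matrix m n ℤ) (hD : C * B⁻¹ = D.map Int.cast) (c : ℝ)
    (βT : n → ℝ) (βP : m → ℝ) :
    (∃ (θ : n → ℝ) (kT : n → ℤ) (kP : m → ℤ), (∀ e, (B *ᵥ θ) e = βT e + c * kT e) ∧
        (∀ f, (C *ᵥ θ) f = βP f + c * kP f)) ↔
      ∀ f, ∃ z : ℤ, ((C * B⁻¹) *ᵥ βT) f - βP f = c * z := by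
  refine ⟨?_, fun h => ⟨_, exists_mulVec_eq_add_intMul_of_inv B C hB c βT βP h⟩⟩
  rintro ⟨θ, kT, kP, hT, hP⟩ f
  have hβT : βT = B *ᵥ θ - c • fun e => (kT e : ℝ) := by
    funext e
    simp only [Pi.sub_apply, Pi.smul_apply, smul_eq_mul, hT e]
    ring
  refine ⟨kP f - (D *ᵥ kT) f, ?_⟩
  rw [hβT, mulVec_sub, mulVec_mulVec, Matrix.mul_assoc,
    nonsing_inv_mul B hB, Matrix.mul_one, mulVec_smul, hD]
  simp only [Pi.sub_apply, Pi.smul_apply, smul_eq_mul, Matrix.map_intCast_mulVec, hP f]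
  push_cast
  ring

end CongruenceSolvability

section RootedTree

variable {n : ℕ} {parent : Fin (n + 1) → Fin (n + 1)}

variable (n parent) in
def parentMatrix : Matrix (Fin n) (Fin n) ℤ :=
  Matrix.of fun e i => if parent e.succ = i.succ then 1 else 0

theorem parentMatrix_apply (e i : Fin n) :
    parentMatrix n parent e i = if parent e.succ = i.succ then 1 else 0 :=
  rfl

theorem treeB_eq_map : treeB n parent = (parentMatrix n parent - 1).map Int.cast := by
  ext e i
  simp [treeB, parentMatrix_apply, one_apply]

theorem parentMatrix_pow_apply (hroot : parent 0 = 0) (k : ℕ) (e i : Fin n) :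
    (parentMatrix n parent ^ k) e i = if parent^[k] e.succ = i.succ then 1 else 0 := by
  induction k generalizing e with
  | zero => simp [one_apply]
  | succ k ih =>
    rw [pow_succ', mul_apply, Function.iterate_succ_apply]
    simp only [ih, parentMatrix_apply, boole_mul]
    cases h : parent e.succ using Fin.cases with
    | zero =>
      simp [Function.iterate_fixed hroot, Fin.succ_ne_zero, eq_comm (a := (0 : Fin (n + 1)))]
    | succ j => simp [Fin.succ_inj]

theorem isNilpotent_parentMatrix (hroot : parent 0 = 0)
    (hacyc : ∀ i, ∃ k : ℕ, parent^[k] i = 0) : IsNilpotent (parentMatrix n parent) := by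
  obtain ⟨K, hK⟩ := Function.exists_iterate_eq_of_forall_exists hroot hacyc
  refine ⟨K, ?_⟩
  ext e i
  simp [parentMatrix_pow_apply hroot, hK, (Fin.succ_ne_zero i).symm]

end RootedTree

/-- Solvability of the angle equation: there exist `θ ∈ ℝ^n` and integer vectors
`k_T ∈ ℤ^n, k_⊥ ∈ ℤ^{m−n}` with `B_T θ = β_T + 2π k_T` and `B_⊥ θ = β_⊥ + 2π k_⊥`
iff `B_⊥ B_T⁻¹ β_T ≡ β_⊥ (mod 2π)`; moreover `θ := B_T⁻¹ β_T` is then a solution. -/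
theorem stmt_11 (n mx : ℕ) (parent : Fin (n + 1) → Fin (n + 1))
    (hroot : parent 0 = 0) (hacyc : ∀ i, ∃ k : ℕ, parent^[k] i = 0)
    (esrc etgt : Fin mx → Fin (n + 1)) (βT : Fin n → ℝ) (βP : Fin mx → ℝ) :
    ((∃ (θ : Fin n → ℝ) (kT : Fin n → ℤ) (kP : Fin mx → ℤ),
        (∀ e, (treeB n parent).mulVec θ e = βT e + 2 * Real.pi * kT e) ∧
        (∀ f, (chordB n mx esrc etgt).mulVec θ f = βP f + 2 * Real.pi * kP f)) ↔
      (∀ f, ∃ z : ℤ,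
        (chordB n mx esrc etgt * (treeB n parent)⁻¹).mulVec βT f - βP f =
          2 * Real.pi * z)) ∧
    ((∀ f, ∃ z : ℤ,
        (chordB n mx esrc etgt * (treeB n parent)⁻¹).mulVec βT f - βP f =
          2 * Real.pi * z) →
      ∃ (kT : Fin n → ℤ) (kP : Fin mx → ℤ),
        (∀ e, (treeB n parent).mulVec ((treeB n parent)⁻¹.mulVec βT) e =
          βT e + 2 * Real.pi * kT e) ∧
        (∀ f, (chordB n mx esrc etgt).mulVec ((treeB n parent)⁻¹.mulVec βT) f =
          βP f + 2 * Real.pi * kP f)) := by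
  obtain ⟨u, hu⟩ := (isNilpotent_parentMatrix hroot hacyc).isUnit_sub_one
  have hBu : treeB n parent * (↑u⁻¹ : Matrix (Fin n) (Fin n) ℤ).map Int.cast = 1 := by
    rw [treeB_eq_map, ← hu, Matrix.map_intCast_val_mul_inv]
  have hdet : IsUnit (treeB n parent).det := isUnit_det_of_right_inverse hBu
  obtain ⟨C, hC⟩ : ∃ C : Matrix (Fin mx) (Fin n) ℤ, chordB n mx esrc etgt = C.map Int.cast :=
    ⟨Matrix.of fun f i => (if esrc f = i.succ then 1 else 0) - (if etgt f = i.succ then 1 else 0),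
      by ext f i; simp [chordB]⟩
  have hD : chordB n mx esrc etgt * (treeB n parent)⁻¹ =
      (C * (↑u⁻¹ : Matrix (Fin n) (Fin n) ℤ)).map Int.cast := by
    rw [inv_eq_right_inv hBu, hC]
    exact (Matrix.map_mul (f := Int.castRingHom ℝ)).symm
  exact ⟨exists_mulVec_eq_add_intMul_iff _ _ hdet _ hD _ βT βP,
    exists_mulVec_eq_add_intMul_of_inv _ _ hdet _ βT βP⟩
end

section
/- Let G be a connected oriented graph and β ∈ ℝ^m. If θ, θ' ∈ (−π, π]^n both satisfy B θ ≡ β (mod 2π) and B θ' ≡ β (mod 2π) componentwise, then θ = θ'. -/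
/-
Subtract the two solutions: `ψ := θ - θ'` satisfies `Bψ ≡ 0 (mod 2π)`. Extending `ψ` by `0` at the
ground vertex `0` gives a potential on all vertices with `(Bψ) e = ψ(src e) - ψ(tgt e)`, so modulo
`2π` the potential is constant along every edge, hence (the graph being connected) equal to its
value `0` at the ground vertex. Thus each `ψ i` is a multiple of `2π`; as `θ i` and `θ' i` both lie
in `(−π, π]`, a half-open interval of length `2π`, they are equal.
-/

open Matrix

lemma sum_ite_eq_succ_mul_eq_cons {R : Type*} [Semiring R] {n : ℕ} (v : Fin (n + 1))
    (ψ : Fin n → R) :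
    ∑ i, (if v = i.succ then 1 else 0) * ψ i = (Fin.cons 0 ψ : Fin (n + 1) → R) v := by
  cases v using Fin.cases with
  | zero => simp [(Fin.succ_ne_zero _).symm]
  | succ j => simp [Fin.succ_inj]

lemma incB_mulVec_apply {n m : ℕ} (src tgt : Fin m → Fin (n + 1)) (ψ : Fin n → ℝ) (e : Fin m) :
    (incB n m src tgt *ᵥ ψ) e =
      (Fin.cons 0 ψ : Fin (n + 1) → ℝ) (src e) - (Fin.cons 0 ψ : Fin (n + 1) → ℝ) (tgt e) := by
  simp only [mulVec, dotProduct, incB, sub_mul, Finset.sum_sub_distrib,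
    sum_ite_eq_succ_mul_eq_cons]

lemma GraphConnected.apply_eq {n m : ℕ} {src tgt : Fin m → Fin (n + 1)}
    (hconn : GraphConnected n m src tgt) {α : Type*} {f : Fin (n + 1) → α}
    (hf : ∀ e, f (src e) = f (tgt e)) (a b : Fin (n + 1)) : f a = f b := by
  induction hconn a b with
  | refl => rfl
  | tail _ hedge ih =>
    obtain ⟨e, ⟨rfl, rfl⟩ | ⟨rfl, rfl⟩⟩ := hedge
    exacts [ih.trans (hf e), ih.trans (hf e).symm]

lemma GraphConnected.map_eq_zero_of_map_incB_mulVec_eq_zero {n m : ℕ}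
    {src tgt : Fin m → Fin (n + 1)} (hconn : GraphConnected n m src tgt) {A : Type*}
    [AddGroup A] (φ : ℝ →+ A) {ψ : Fin n → ℝ} (hψ : ∀ e, φ ((incB n m src tgt *ᵥ ψ) e) = 0)
    (i : Fin n) : φ (ψ i) = 0 := by
  let p : Fin (n + 1) → ℝ := Fin.cons 0 ψ
  have hedge : ∀ e, φ (p (src e)) = φ (p (tgt e)) := fun e => by
    rw [← sub_eq_zero, ← map_sub, ← incB_mulVec_apply, hψ]
  simpa [p] using hconn.apply_eq (f := φ ∘ p) hedge i.succ 0

lemma Real.Angle.coe_eq_iff_exists_int {x y : ℝ} :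
    (x : Real.Angle) = y ↔ ∃ z : ℤ, x = y + 2 * Real.pi * z := by
  simp only [Real.Angle.angle_eq_iff_two_pi_dvd_sub, sub_eq_iff_eq_add']

lemma Real.Angle.eq_of_coe_eq_of_mem_Ioc {x y : ℝ} (hxy : (x : Real.Angle) = y)
    (hx : x ∈ Set.Ioc (-Real.pi) Real.pi) (hy : y ∈ Set.Ioc (-Real.pi) Real.pi) : x = y := by
  rw [← Real.Angle.toReal_coe_eq_self_iff_mem_Ioc.2 hx,
    ← Real.Angle.toReal_coe_eq_self_iff_mem_Ioc.2 hy, hxy]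

/-- Uniqueness in `(−π, π]^n`: if `θ, θ'` both lie componentwise in `(−π, π]` and both
satisfy `Bθ ≡ β (mod 2π)` componentwise, then `θ = θ'`. -/
theorem stmt_16 (n m : ℕ) (src tgt : Fin m → Fin (n + 1))
    (hconn : GraphConnected n m src tgt)
    (β : Fin m → ℝ) (θ θ' : Fin n → ℝ)
    (hθr : ∀ i, θ i ∈ Set.Ioc (-Real.pi) Real.pi)
    (hθ'r : ∀ i, θ' i ∈ Set.Ioc (-Real.pi) Real.pi)
    (hθ : ∀ e, ∃ z : ℤ, (incB n m src tgt).mulVec θ e = β e + 2 * Real.pi * z)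
    (hθ' : ∀ e, ∃ z : ℤ, (incB n m src tgt).mulVec θ' e = β e + 2 * Real.pi * z) :
    θ = θ' := by
  have hker : ∀ e, Real.Angle.coeHom ((incB n m src tgt *ᵥ (θ - θ')) e) = 0 := fun e => by
    rw [mulVec_sub, Pi.sub_apply, map_sub, sub_eq_zero, Real.Angle.coe_coeHom,
      Real.Angle.coe_eq_iff_exists_int.2 (hθ e), Real.Angle.coe_eq_iff_exists_int.2 (hθ' e)]
  funext i
  have hi := hconn.map_eq_zero_of_map_incB_mulVec_eq_zero Real.Angle.coeHom hker i
  rw [Pi.sub_apply, map_sub, sub_eq_zero] at hi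
  exact Real.Angle.eq_of_coe_eq_of_mem_Ioc hi (hθr i) (hθ'r i)
end

section
/- Let T be a spanning tree of G with invertible tree submatrix B_T of the reduced incidence matrix B = [B_T; B_⊥]. For each non-tree edge e = (i,j), (B_⊥ B_T^{-1} β_T)_e equals the sum of β over edges of the tree path from 0 to j minus the sum of β over edges of the tree path from 0 to i, i.e. the signed sum of β along the tree path from i to j. -/
/-!
Let `φ v` be the sum of `β_T` along the tree path from the root to `v`, so `φ 0 = 0`. Every tree
edge `e` from `parent (e+1)` to `e+1` satisfies `φ (e+1) - φ (parent (e+1)) = β_e`, so the reduced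
vector `-φ` solves `B_T x = β_T`; this shows at the same time that `B_T` is invertible and that
`B_T⁻¹ β_T = -φ`. A row of `B_⊥` applied to a reduced vertex potential takes its difference
along the non-tree edge, which gives `φ j - φ i`.
-/

open scoped Classical

open scoped Matrix

theorem Function.IsPeriodicPt.eq_of_iterate_eq_of_isFixedPt {α : Type*} {f : α → α}
    {x r : α} {k m : ℕ} (hx : Function.IsPeriodicPt f k x) (hk : 0 < k)
    (hr : Function.IsFixedPt f r) (hm : f^[m] x = r) : x = r :=
  (hx.iterate m).eq_of_apply_eq_same ((hr.isPeriodicPt k).iterate m) hk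
    (by rw [hm, Function.iterate_fixed hr])

section Potential

variable {n : ℕ} {parent : Fin (n + 1) → Fin (n + 1)}

theorem not_onPath_zero (hroot : parent 0 = 0) (e : Fin n) : ¬ onPath n parent 0 e := by
  rintro ⟨k, hk⟩
  rw [Function.iterate_fixed hroot] at hk
  exact Fin.succ_ne_zero e hk.symm

theorem onPath_succ_iff (i e : Fin n) :
    onPath n parent i.succ e ↔ e = i ∨ onPath n parent (parent i.succ) e := by
  constructor
  · rintro ⟨_ | k, hk⟩
    · exact Or.inl (Fin.succ_injective _ hk.symm)
    · exact Or.inr ⟨k, by rwa [Function.iterate_succ_apply] at hk⟩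
  · rintro (rfl | ⟨k, hk⟩)
    · exact ⟨0, rfl⟩
    · exact ⟨k + 1, by rwa [Function.iterate_succ_apply]⟩

theorem not_onPath_parent_self (hroot : parent 0 = 0)
    (hacyc : ∀ i, ∃ k : ℕ, parent^[k] i = 0) (i : Fin n) :
    ¬ onPath n parent (parent i.succ) i := by
  rintro ⟨k, hk⟩
  obtain ⟨m, hm⟩ := hacyc i.succ
  have hperiodic : Function.IsPeriodicPt parent (k + 1) i.succ := by
    rwa [Function.IsPeriodicPt, Function.IsFixedPt, Function.iterate_succ_apply]
  exact Fin.succ_ne_zero i (hperiodic.eq_of_iterate_eq_of_isFixedPt k.succ_pos hroot hm)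

noncomputable def pathSum (parent : Fin (n + 1) → Fin (n + 1)) (β : Fin n → ℝ)
    (v : Fin (n + 1)) : ℝ :=
  ∑ e ∈ Finset.univ.filter (onPath n parent v), β e

theorem pathSum_zero (hroot : parent 0 = 0) (β : Fin n → ℝ) : pathSum parent β 0 = 0 :=
  Finset.sum_eq_zero fun e he => absurd (Finset.mem_filter.1 he).2 (not_onPath_zero hroot e)

theorem pathSum_succ (hroot : parent 0 = 0) (hacyc : ∀ i, ∃ k : ℕ, parent^[k] i = 0)
    (β : Fin n → ℝ) (i : Fin n) :
    pathSum parent β i.succ = β i + pathSum parent β (parent i.succ) := by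
  have hpath : Finset.univ.filter (onPath n parent i.succ) =
      insert i (Finset.univ.filter (onPath n parent (parent i.succ))) := by
    ext e
    simp [onPath_succ_iff i e]
  rw [pathSum, hpath, Finset.sum_insert (by simpa using not_onPath_parent_self hroot hacyc i)]
  rfl

end Potential

section Incidence

variable {n : ℕ}

theorem sum_indicator_succ_mul (φ : Fin (n + 1) → ℝ) (hφ : φ 0 = 0) (v : Fin (n + 1)) :
    ∑ i : Fin n, (if v = i.succ then (1 : ℝ) else 0) * φ i.succ = φ v := by
  cases v using Fin.cases with
  | zero => simp [(Fin.succ_ne_zero _).symm, hφ]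
  | succ j => simp [Fin.succ_inj]

theorem treeB_mulVec_apply (parent : Fin (n + 1) → Fin (n + 1)) (φ : Fin (n + 1) → ℝ)
    (hφ : φ 0 = 0) (e : Fin n) :
    (treeB n parent *ᵥ fun i => φ i.succ) e = φ (parent e.succ) - φ e.succ := by
  simp only [Matrix.mulVec, dotProduct, treeB, sub_mul, Finset.sum_sub_distrib,
    ← Fin.succ_inj (a := e), sum_indicator_succ_mul φ hφ]

theorem chordB_mulVec_apply {mx : ℕ} (esrc etgt : Fin mx → Fin (n + 1))
    (φ : Fin (n + 1) → ℝ) (hφ : φ 0 = 0) (f : Fin mx) :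
    (chordB n mx esrc etgt *ᵥ fun i => φ i.succ) f = φ (esrc f) - φ (etgt f) := by
  simp only [Matrix.mulVec, dotProduct, chordB, sub_mul, Finset.sum_sub_distrib,
    sum_indicator_succ_mul φ hφ]

end Incidence

section TreeInverse

variable {n : ℕ} {parent : Fin (n + 1) → Fin (n + 1)}

theorem treeB_mulVec_neg_pathSum (hroot : parent 0 = 0)
    (hacyc : ∀ i, ∃ k : ℕ, parent^[k] i = 0) (β : Fin n → ℝ) :
    (treeB n parent *ᵥ fun i => -pathSum parent β i.succ) = β := by
  ext e
  rw [treeB_mulVec_apply parent (fun v => -pathSum parent β v) (by simp [pathSum_zero hroot]),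
    pathSum_succ hroot hacyc]
  ring

theorem isUnit_treeB (hroot : parent 0 = 0) (hacyc : ∀ i, ∃ k : ℕ, parent^[k] i = 0) :
    IsUnit (treeB n parent) :=
  Matrix.mulVec_surjective_iff_isUnit.1 fun β => ⟨_, treeB_mulVec_neg_pathSum hroot hacyc β⟩

theorem treeB_inv_mulVec (hroot : parent 0 = 0) (hacyc : ∀ i, ∃ k : ℕ, parent^[k] i = 0)
    (β : Fin n → ℝ) :
    (treeB n parent)⁻¹ *ᵥ β = fun i => -pathSum parent β i.succ := by
  have := (isUnit_treeB hroot hacyc).invertible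
  exact Matrix.inv_mulVec_eq_vec (treeB_mulVec_neg_pathSum hroot hacyc β).symm

end TreeInverse

/-- For each non-tree edge `f = (i,j)`, `(B_⊥ B_T⁻¹ β_T)_f` equals the sum of `β_T` over
the tree path from `0` to `j` minus the sum over the tree path from `0` to `i`. -/
theorem stmt_18 (n mx : ℕ) (parent : Fin (n + 1) → Fin (n + 1))
    (hroot : parent 0 = 0) (hacyc : ∀ i, ∃ k : ℕ, parent^[k] i = 0)
    (esrc etgt : Fin mx → Fin (n + 1)) (βT : Fin n → ℝ) (f : Fin mx) :
    (chordB n mx esrc etgt * (treeB n parent)⁻¹).mulVec βT f =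
      (∑ e ∈ Finset.univ.filter (onPath n parent (etgt f)), βT e) -
        ∑ e ∈ Finset.univ.filter (onPath n parent (esrc f)), βT e := by
  rw [← Matrix.mulVec_mulVec, treeB_inv_mulVec hroot hacyc,
    chordB_mulVec_apply esrc etgt (fun v => -pathSum parent βT v) (by simp [pathSum_zero hroot]),
    pathSum, pathSum, neg_sub_neg]
end
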